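/- Let G be a group. The set of equivalence classes of isomorphisms between finite index subgroups of G, where two isomorphisms are identified if they agree on a common finite index subgroup, forms a group Vaut(G) under composition (composing a: G₁ → G₂ and b: G₃ → G₄ on the finite index subgroup a⁻¹(G₂ ∩ G₃)). -/

import Mathlib

/-- A virtual automorphism of `G`: an isomorphism between two finite index
subgroups of `G`. -/
structure VirtualAut (G : Type*) [Group G] where
  dom : Subgroup G
  cod : Subgroup G
  dom_fi : dom.FiniteIndex
  cod_fi : cod.FiniteIndex
  e : dom ≃* cod

/-- Two virtual automorphisms are equivalent if they agree on a common finite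
index subgroup. -/
def VirtualAutEquiv {G : Type*} [Group G] (a b : VirtualAut G) : Prop :=
  ∃ L : Subgroup G, L.FiniteIndex ∧
    ∃ (h1 : L ≤ a.dom) (h2 : L ≤ b.dom),
      ∀ (x : G) (hx : x ∈ L),
        ((a.e ⟨x, h1 hx⟩ : a.cod) : G) = ((b.e ⟨x, h2 hx⟩ : b.cod) : G)

/-- `c` represents the composition `b ∘ a` of the virtual automorphisms `a`
and `b` (defined on `a⁻¹(a.cod ⊓ b.dom)`): on its (finite index) domain, `c`
agrees with applying `a` and then `b`. -/
def IsComp {G : Type*} [Group G] (a b c : VirtualAut G) : Prop :=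
  ∃ h1 : c.dom ≤ a.dom,
    ∀ (x : G) (hx : x ∈ c.dom),
      ∃ h2 : ((a.e ⟨x, h1 hx⟩ : a.cod) : G) ∈ b.dom,
        ((c.e ⟨x, hx⟩ : c.cod) : G) = ((b.e ⟨_, h2⟩ : b.cod) : G)

namespace VirtualAut

variable {G : Type*} [Group G]

/-- The underlying monoid hom `a.dom →* G`. -/
def toHom (a : VirtualAut G) : a.dom →* G := a.cod.subtype.comp a.e.toMonoidHom

lemma toHom_apply (a : VirtualAut G) (x : a.dom) : a.toHom x = (a.e x : G) := rfl

lemma toHom_inj (a : VirtualAut G) : Function.Injective a.toHom := by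
  intro x y h
  exact a.e.injective (Subtype.ext h)

lemma toHom_range (a : VirtualAut G) : a.toHom.range = a.cod := by
  ext x
  constructor
  · rintro ⟨y, rfl⟩; exact (a.e y).2
  · intro hx; exact ⟨a.e.symm ⟨x, hx⟩, by simp [toHom_apply]⟩

lemma e_congr (b : VirtualAut G) {u v : b.dom} (h : (u : G) = v) :
    ((b.e u : b.cod) : G) = ((b.e v : b.cod) : G) := by
  rw [Subtype.ext h]

/-- The pullback of a subgroup `K ≤ G` along `a`, as a subgroup of `G`. -/
def pull (a : VirtualAut G) (K : Subgroup G) : Subgroup G :=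
  Subgroup.map a.dom.subtype (K.comap a.toHom)

lemma pull_le (a : VirtualAut G) (K : Subgroup G) : a.pull K ≤ a.dom := by
  rintro x ⟨y, hy, rfl⟩
  exact y.2

lemma mem_pull {a : VirtualAut G} {K : Subgroup G} {x : G} :
    x ∈ a.pull K ↔ ∃ h : x ∈ a.dom, ((a.e ⟨x, h⟩ : a.cod) : G) ∈ K := by
  constructor
  · rintro ⟨y, hy, rfl⟩
    exact ⟨y.2, hy⟩
  · rintro ⟨h, hK⟩
    exact ⟨⟨x, h⟩, hK, rfl⟩

lemma pull_fi (a : VirtualAut G) (K : Subgroup G) (hK : K.FiniteIndex) :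
    (a.pull K).FiniteIndex := by
  haveI := a.dom_fi
  haveI := a.cod_fi
  haveI := hK
  constructor
  rw [pull, Subgroup.index_map_subtype, Subgroup.index_comap, toHom_range]
  apply mul_ne_zero _ a.dom_fi.index_ne_zero
  rw [← Subgroup.inf_relIndex_right]
  intro h0
  have := Subgroup.relIndex_mul_index (inf_le_right : K ⊓ a.cod ≤ a.cod)
  rw [h0, zero_mul] at this
  exact (inferInstance : (K ⊓ a.cod).FiniteIndex).index_ne_zero this.symm

/-- Domain of the composite `b ∘ a`. -/
def compDom (b a : VirtualAut G) : Subgroup G := a.pull b.dom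

lemma compDom_le (b a : VirtualAut G) : compDom b a ≤ a.dom := a.pull_le _

lemma compDom_mem2 {b a : VirtualAut G} {x : G} (hx : x ∈ compDom b a) :
    ((a.e ⟨x, compDom_le b a hx⟩ : a.cod) : G) ∈ b.dom := by
  obtain ⟨h, hK⟩ := mem_pull.mp hx
  exact hK

/-- The composite hom `compDom b a →* G`. -/
def compHom (b a : VirtualAut G) : (compDom b a) →* G :=
  b.toHom.comp ((MonoidHom.codRestrict (a.toHom.comp (Subgroup.inclusion (compDom_le b a)))
    b.dom (fun x => compDom_mem2 x.2)))

lemma compHom_apply (b a : VirtualAut G) (x : compDom b a) :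
    compHom b a x =
      ((b.e ⟨((a.e ⟨x.1, compDom_le b a x.2⟩ : a.cod) : G), compDom_mem2 x.2⟩ : b.cod) : G) := rfl

lemma compHom_inj (b a : VirtualAut G) : Function.Injective (compHom b a) := by
  intro x y h
  rw [compHom_apply, compHom_apply] at h
  have h1 := Subtype.ext_iff.mp (b.e.injective (Subtype.ext h))
  have h2 := Subtype.ext_iff.mp (a.e.injective (Subtype.ext h1))
  exact Subtype.ext h2

lemma compHom_range (b a : VirtualAut G) :
    (compHom b a).range = Subgroup.map b.toHom ((a.cod ⊓ b.dom).comap b.dom.subtype) := by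
  ext z
  constructor
  · rintro ⟨x, rfl⟩
    refine ⟨⟨((a.e ⟨x.1, compDom_le b a x.2⟩ : a.cod) : G), compDom_mem2 x.2⟩, ⟨?_, ?_⟩, rfl⟩
    · exact (a.e _).2
    · exact compDom_mem2 x.2
  · rintro ⟨⟨w, hw⟩, ⟨hw1, hw2⟩, rfl⟩
    obtain ⟨u, hu⟩ : ∃ u : a.dom, a.toHom u = w := by
      have : w ∈ a.toHom.range := by rw [toHom_range]; exact hw1
      exact this
    have hx : (u : G) ∈ compDom b a := by
      rw [compDom, mem_pull]
      exact ⟨u.2, by rw [← toHom_apply]; simpa [hu] using hw2⟩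
    refine ⟨⟨u, hx⟩, ?_⟩
    show b.toHom ⟨a.toHom (Subgroup.inclusion (compDom_le b a) ⟨(u : G), hx⟩), _⟩
      = b.toHom ⟨w, hw⟩
    congr 1
    exact Subtype.ext hu

lemma push_fi (b : VirtualAut G) (M : Subgroup G) (hM : M.FiniteIndex) :
    (Subgroup.map b.toHom (M.comap b.dom.subtype)).FiniteIndex := by
  haveI := b.cod_fi
  haveI := b.dom_fi
  haveI := hM
  constructor
  rw [Subgroup.index_map_of_injective _ b.toHom_inj, toHom_range]
  apply mul_ne_zero
  · show M.relIndex b.dom ≠ 0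
    rw [← Subgroup.inf_relIndex_right]
    intro h0
    have := Subgroup.relIndex_mul_index (inf_le_right : M ⊓ b.dom ≤ b.dom)
    rw [h0, zero_mul] at this
    exact (inferInstance : (M ⊓ b.dom).FiniteIndex).index_ne_zero this.symm
  · exact b.cod_fi.index_ne_zero

/-- The composite `b ∘ a` of virtual automorphisms. -/
noncomputable def comp (b a : VirtualAut G) : VirtualAut G where
  dom := compDom b a
  cod := (compHom b a).range
  dom_fi := a.pull_fi b.dom b.dom_fi
  cod_fi := by
    haveI := a.cod_fi
    haveI := b.dom_fi
    rw [compHom_range]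
    exact push_fi b (a.cod ⊓ b.dom) inferInstance
  e := MonoidHom.ofInjective (compHom_inj b a)

lemma mem_comp_dom {b a : VirtualAut G} {x : G} :
    x ∈ (comp b a).dom ↔ ∃ h : x ∈ a.dom, ((a.e ⟨x, h⟩ : a.cod) : G) ∈ b.dom :=
  mem_pull

lemma comp_apply (b a : VirtualAut G) (x : G) (hx : x ∈ (comp b a).dom) (h1 : x ∈ a.dom)
    (h2 : ((a.e ⟨x, h1⟩ : a.cod) : G) ∈ b.dom) :
    (((comp b a).e ⟨x, hx⟩ : (comp b a).cod) : G)
      = ((b.e ⟨((a.e ⟨x, h1⟩ : a.cod) : G), h2⟩ : b.cod) : G) := by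
  rw [show (((comp b a).e ⟨x, hx⟩ : (comp b a).cod) : G) = compHom b a ⟨x, hx⟩ from
    MonoidHom.ofInjective_apply (compHom_inj b a), compHom_apply]

/-- The identity virtual automorphism. -/
def one' : VirtualAut G where
  dom := ⊤
  cod := ⊤
  dom_fi := inferInstance
  cod_fi := inferInstance
  e := MulEquiv.refl _

/-- The inverse of a virtual automorphism. -/
def inv' (a : VirtualAut G) : VirtualAut G where
  dom := a.cod
  cod := a.dom
  dom_fi := a.cod_fi
  cod_fi := a.dom_fi
  e := a.e.symm

lemma equiv_refl (a : VirtualAut G) : VirtualAutEquiv a a :=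
  ⟨a.dom, a.dom_fi, le_refl _, le_refl _, fun _ _ => rfl⟩

lemma equiv_symm {a b : VirtualAut G} (h : VirtualAutEquiv a b) : VirtualAutEquiv b a := by
  obtain ⟨L, fi, h1, h2, H⟩ := h
  exact ⟨L, fi, h2, h1, fun x hx => (H x hx).symm⟩

lemma equiv_trans {a b c : VirtualAut G} (h : VirtualAutEquiv a b) (h' : VirtualAutEquiv b c) :
    VirtualAutEquiv a c := by
  obtain ⟨L, fi, h1, h2, H⟩ := h
  obtain ⟨L', fi', h1', h2', H'⟩ := h'
  haveI := fi
  haveI := fi'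
  refine ⟨L ⊓ L', inferInstance, inf_le_left.trans h1, inf_le_right.trans h2', ?_⟩
  intro x hx
  exact (H x hx.1).trans (H' x hx.2)

lemma symm_coe (a : VirtualAut G) (u : a.dom) (h : ((a.e u : a.cod) : G) ∈ a.cod) :
    ((a.e.symm ⟨((a.e u : a.cod) : G), h⟩ : a.dom) : G) = u :=
  congrArg Subtype.val (a.e.symm_apply_apply u)

lemma symm_congr (b : VirtualAut G) {u v : b.cod} (h : (u : G) = v) :
    ((b.e.symm u : b.dom) : G) = ((b.e.symm v : b.dom) : G) := by
  rw [Subtype.ext h]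

lemma comp_congr {a a' b b' : VirtualAut G} (ha : VirtualAutEquiv a a')
    (hb : VirtualAutEquiv b b') : VirtualAutEquiv (comp b a) (comp b' a') := by
  obtain ⟨L₁, fi₁, p1, p2, H₁⟩ := ha
  obtain ⟨L₂, fi₂, q1, q2, H₂⟩ := hb
  haveI := (comp b a).dom_fi
  haveI := (comp b' a').dom_fi
  haveI := fi₁
  haveI := a.pull_fi L₂ fi₂
  refine ⟨(comp b a).dom ⊓ (comp b' a').dom ⊓ L₁ ⊓ a.pull L₂, inferInstance,
    fun x hx => hx.1.1.1, fun x hx => hx.1.1.2, ?_⟩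
  intro x hx
  obtain ⟨ha1, ha2⟩ := mem_comp_dom.mp hx.1.1.1
  obtain ⟨ha1', ha2'⟩ := mem_comp_dom.mp hx.1.1.2
  obtain ⟨_, hP⟩ := mem_pull.mp hx.2
  rw [comp_apply b a x hx.1.1.1 ha1 ha2, comp_apply b' a' x hx.1.1.2 ha1' ha2']
  exact (H₂ _ hP).trans (b'.e_congr (H₁ x hx.1.2))

lemma comp_assoc (c b a : VirtualAut G) :
    VirtualAutEquiv (comp (comp c b) a) (comp c (comp b a)) := by
  haveI := (comp (comp c b) a).dom_fi
  haveI := (comp c (comp b a)).dom_fi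
  refine ⟨(comp (comp c b) a).dom ⊓ (comp c (comp b a)).dom, inferInstance,
    inf_le_left, inf_le_right, ?_⟩
  intro x hx
  obtain ⟨h1, h2⟩ := mem_comp_dom.mp hx.1
  obtain ⟨h3, h4⟩ := mem_comp_dom.mp h2
  obtain ⟨h1', h2'⟩ := mem_comp_dom.mp hx.2
  rw [comp_apply _ _ _ hx.1 h1 h2, comp_apply _ _ _ h2 h3 h4,
    comp_apply _ _ _ hx.2 h1' h2']
  exact c.e_congr ((comp_apply b a x h1' h1 h3).symm)

lemma comp_one_left (a : VirtualAut G) : VirtualAutEquiv (comp one' a) a := by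
  refine ⟨(comp one' a).dom, (comp one' a).dom_fi, le_refl _, compDom_le one' a, ?_⟩
  intro x hx
  obtain ⟨h1, h2⟩ := mem_comp_dom.mp hx
  rw [comp_apply _ _ _ hx h1 h2]
  rfl

lemma comp_one_right (a : VirtualAut G) : VirtualAutEquiv (comp a one') a := by
  refine ⟨(comp a one').dom, (comp a one').dom_fi, le_refl _, ?_, ?_⟩
  · intro x hx
    obtain ⟨h1, h2⟩ := mem_comp_dom.mp hx
    exact h2
  · intro x hx
    obtain ⟨h1, h2⟩ := mem_comp_dom.mp hx
    rw [comp_apply _ _ _ hx h1 h2]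
    rfl

lemma comp_inv (a : VirtualAut G) : VirtualAutEquiv (comp (inv' a) a) one' := by
  refine ⟨(comp (inv' a) a).dom, (comp (inv' a) a).dom_fi, le_refl _, le_top, ?_⟩
  intro x hx
  obtain ⟨h1, h2⟩ := mem_comp_dom.mp hx
  rw [comp_apply _ _ _ hx h1 h2]
  exact symm_coe a ⟨x, h1⟩ h2

lemma inv_congr {a b : VirtualAut G} (h : VirtualAutEquiv a b) :
    VirtualAutEquiv (inv' a) (inv' b) := by
  obtain ⟨L, fi, h1, h2, H⟩ := h
  refine ⟨Subgroup.map a.toHom (L.comap a.dom.subtype), push_fi a L fi, ?_, ?_, ?_⟩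
  · rintro y ⟨⟨x, hxd⟩, hxL, rfl⟩
    exact (a.e ⟨x, hxd⟩).2
  · rintro y ⟨⟨x, hxd⟩, hxL, rfl⟩
    show ((a.e ⟨x, hxd⟩ : a.cod) : G) ∈ b.cod
    rw [show ((a.e ⟨x, hxd⟩ : a.cod) : G) = ((b.e ⟨x, h2 hxL⟩ : b.cod) : G) from H x hxL]
    exact (b.e ⟨x, h2 hxL⟩).2
  · intro y hy
    obtain ⟨⟨x, hxd⟩, hxL, rfl⟩ := hy
    refine (symm_coe a ⟨x, hxd⟩ _).trans ?_
    exact ((symm_congr b (H x hxL)).trans (symm_coe b ⟨x, h2 hxL⟩ _)).symm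

lemma comp_of_isComp {a b c : VirtualAut G} (h : IsComp a b c) :
    VirtualAutEquiv (comp b a) c := by
  obtain ⟨hle, H⟩ := h
  have hd : c.dom ≤ (comp b a).dom := by
    intro x hx
    obtain ⟨h2, _⟩ := H x hx
    exact mem_comp_dom.mpr ⟨hle hx, h2⟩
  refine ⟨c.dom, c.dom_fi, hd, le_refl _, ?_⟩
  intro x hx
  obtain ⟨h2, heq⟩ := H x hx
  rw [comp_apply _ _ _ (hd hx) (hle hx) h2]
  exact heq.symm

/-- Multiplication on the quotient. -/
noncomputable def mulq : Quot (VirtualAutEquiv (G := G)) → Quot (VirtualAutEquiv (G := G)) →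
    Quot (VirtualAutEquiv (G := G)) :=
  Quot.lift
    (fun b => Quot.lift (fun a => Quot.mk _ (comp b a))
      (fun _ _ ha => Quot.sound (comp_congr ha (equiv_refl b))))
    (fun _ _ hb => funext fun x =>
      Quot.inductionOn x (fun a => Quot.sound (comp_congr (equiv_refl a) hb)))

end VirtualAut

/-- The set of equivalence classes of isomorphisms between finite index
subgroups of `G`, where two isomorphisms are identified when they agree on a
common finite index subgroup, forms a group `Vaut(G)` under composition. -/
theorem vaut_is_group (G : Type*) [Group G] :
    Equivalence (VirtualAutEquiv (G := G)) ∧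
    ∃ (mul : Quot (VirtualAutEquiv (G := G)) → Quot (VirtualAutEquiv (G := G)) →
        Quot (VirtualAutEquiv (G := G)))
      (one : Quot (VirtualAutEquiv (G := G)))
      (inv : Quot (VirtualAutEquiv (G := G)) → Quot (VirtualAutEquiv (G := G))),
      (∀ x y z, mul (mul x y) z = mul x (mul y z)) ∧
      (∀ x, mul one x = x) ∧
      (∀ x, mul x one = x) ∧
      (∀ x, mul (inv x) x = one) ∧
      (∀ a b c : VirtualAut G, IsComp a b c →
        mul (Quot.mk _ b) (Quot.mk _ a) = Quot.mk _ c) := by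
  refine ⟨⟨VirtualAut.equiv_refl, VirtualAut.equiv_symm, VirtualAut.equiv_trans⟩,
    VirtualAut.mulq, Quot.mk _ VirtualAut.one',
    Quot.map VirtualAut.inv' (fun _ _ h => VirtualAut.inv_congr h), ?_, ?_, ?_, ?_, ?_⟩
  · intro x y z
    induction x using Quot.ind with | mk x =>
    induction y using Quot.ind with | mk y =>
    induction z using Quot.ind with | mk z =>
    exact Quot.sound (VirtualAut.comp_assoc x y z)
  · intro x
    induction x using Quot.ind with | mk x =>
    exact Quot.sound (VirtualAut.comp_one_left x)
  · intro x
    induction x using Quot.ind with | mk x =>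
    exact Quot.sound (VirtualAut.comp_one_right x)
  · intro x
    induction x using Quot.ind with | mk x =>
    exact Quot.sound (VirtualAut.comp_inv x)
  · intro a b c h
    exact Quot.sound (VirtualAut.comp_of_isComp h)
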